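/- Let k ≥ 2 be an integer and m, n nonnegative integers, and define A_k(m, n) = ((2m + k − 1)! / (m! · (2m + n + k − 1)! · (k/2)_m)) · (k/(2(k − 1)))^m · ∫_{[0,∞)^k} (e₂(x))^m (e₁(x))^n e^{−e₁(x)} dx. Then A_k(m, n) does not depend on n: for all m, n ≥ 0, A_k(m, n + 1) = A_k(m, n), and hence A_k(m, n) = A_k(m, 0) for all n ≥ 0. -/

import Mathlib

open MeasureTheory Finset

/-- `e₁(x) = ∑ᵢ xᵢ` -/
noncomputable def e1 {k : ℕ} (x : Fin k → ℝ) : ℝ := ∑ i, x i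

/-- `e₂(x) = ∑_{i<j} xᵢ xⱼ` -/
noncomputable def e2 {k : ℕ} (x : Fin k → ℝ) : ℝ := ∑ i, ∑ j ∈ Finset.Ioi i, x i * x j

/-- Pochhammer symbol `(y)ₘ = ∏_{i=0}^{m-1} (y + i)` -/
noncomputable def poch (y : ℝ) (m : ℕ) : ℝ := ∏ i ∈ Finset.range m, (y + i)

/-- The normalized integral `A_k(m, n)` of the paper. -/
noncomputable def A (k m n : ℕ) : ℝ :=
  ((2 * m + k - 1).factorial : ℝ) /
      ((m.factorial : ℝ) * ((2 * m + n + k - 1).factorial : ℝ) * poch ((k : ℝ) / 2) m) *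
    ((k : ℝ) / (2 * ((k : ℝ) - 1))) ^ m *
    ∫ x : Fin k → ℝ in Set.univ.pi fun _ => Set.Ici (0 : ℝ),
      e2 x ^ m * e1 x ^ n * Real.exp (-(e1 x))

/-!
Let `f ≥ 0` be homogeneous of degree `d` on the orthant `[0, ∞)^k`. Writing
`e^{-t} = ∫_1^∞ t e^{-st} ds` and swapping the integrals (Tonelli),
`∫ f e^{-e₁} = ∫_1^∞ ∫ f e₁ e^{-s e₁} dx ds`; the substitution `x ↦ x / s` makes the inner
integral `s^{-(d+k+1)} ∫ f e₁ e^{-e₁}`, and `∫_1^∞ s^{-(d+k+1)} ds = 1 / (d + k)`. Hence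
`∫ f e₁ e^{-e₁} = (d + k) ∫ f e^{-e₁}`. For `f = e₂^m e₁^n`, of degree `2m + n`, the moment
thus gains the factor `2m + n + k` when `n` increases by one, which is exactly the factor the
factorial `(2m + n + k - 1)!` in the normalisation of `A_k(m, n)` gains. Working with lower
Lebesgue integrals, the recursion needs no a priori finiteness of the moments.
-/

open scoped ENNReal

theorem lintegral_comp_smul {E : Type*} [NormedAddCommGroup E] [NormedSpace ℝ E]
    [MeasurableSpace E] [BorelSpace E] [FiniteDimensional ℝ E] (μ : Measure E)
    [μ.IsAddHaarMeasure] (g : E → ℝ≥0∞) {s : ℝ} (hs : s ≠ 0) :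
    ∫⁻ x, g (s • x) ∂μ = ENNReal.ofReal |(s ^ Module.finrank ℝ E)⁻¹| * ∫⁻ x, g x ∂μ := by
  rw [← smul_eq_mul, ← lintegral_smul_measure, ← Measure.map_addHaar_smul μ hs]
  exact (lintegral_map_equiv g (MeasurableEquiv.smul₀ s hs)).symm

theorem lintegral_Ioi_one_mul_exp_neg_mul {t : ℝ} (ht : 0 < t) :
    ∫⁻ s in Set.Ioi 1, ENNReal.ofReal (t * Real.exp (-(s * t)))
      = ENNReal.ofReal (Real.exp (-t)) := by
  have hint : IntegrableOn (fun s => t * Real.exp (-t * s)) (Set.Ioi 1) :=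
    (integrableOn_exp_mul_Ioi (neg_lt_zero.2 ht) 1).const_mul t
  simp_rw [show ∀ s, -(s * t) = -t * s from fun s => by ring]
  rw [← ofReal_integral_eq_lintegral_ofReal hint (.of_forall fun s => by positivity),
    integral_const_mul, integral_exp_mul_Ioi (neg_lt_zero.2 ht)]
  field_simp

theorem lintegral_Ioi_one_rpow_neg {a : ℝ} (ha : 0 < a) :
    ∫⁻ s in Set.Ioi 1, ENNReal.ofReal (s ^ (-(a + 1))) = ENNReal.ofReal a⁻¹ := by
  have hlt : -(a + 1) < -1 := by linarith
  rw [← ofReal_integral_eq_lintegral_ofReal (integrableOn_Ioi_rpow_of_lt hlt one_pos)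
    ((ae_restrict_iff' measurableSet_Ioi).2 (.of_forall fun s hs =>
      Real.rpow_nonneg (zero_le_one.trans (le_of_lt hs)) _)),
    integral_Ioi_rpow_of_lt hlt one_pos, Real.one_rpow, show -(a + 1) + 1 = -a by ring]
  field_simp

abbrev orthant (k : ℕ) : Set (Fin k → ℝ) := Set.univ.pi fun _ => Set.Ici 0

section Orthant

variable {k : ℕ}

theorem measurableSet_orthant : MeasurableSet (orthant k) :=
  .univ_pi fun _ => measurableSet_Ici

theorem smul_mem_orthant_iff {s : ℝ} (hs : 0 < s) {x : Fin k → ℝ} :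
    s • x ∈ orthant k ↔ x ∈ orthant k := by
  simp only [Set.mem_univ_pi, Set.mem_Ici, Pi.smul_apply, smul_eq_mul]
  exact forall_congr' fun i => mul_nonneg_iff_of_pos_left hs

@[fun_prop]
theorem continuous_e1 : Continuous (e1 (k := k)) :=
  continuous_finsetSum _ fun i _ => continuous_apply i

@[fun_prop]
theorem continuous_e2 : Continuous (e2 (k := k)) :=
  continuous_finsetSum _ fun i _ => continuous_finsetSum _ fun j _ =>
    (continuous_apply i).mul (continuous_apply j)

theorem e1_smul (s : ℝ) (x : Fin k → ℝ) : e1 (s • x) = s * e1 x := by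
  simp [e1, Finset.mul_sum]

theorem e2_smul (s : ℝ) (x : Fin k → ℝ) : e2 (s • x) = s ^ 2 * e2 x := by
  simp only [e2, Finset.mul_sum, Pi.smul_apply, smul_eq_mul]
  exact Finset.sum_congr rfl fun i _ => Finset.sum_congr rfl fun j _ => by ring

theorem e1_nonneg {x : Fin k → ℝ} (hx : x ∈ orthant k) : 0 ≤ e1 x :=
  Finset.sum_nonneg fun i _ => hx i (Set.mem_univ i)

theorem e2_nonneg {x : Fin k → ℝ} (hx : x ∈ orthant k) : 0 ≤ e2 x :=
  Finset.sum_nonneg fun i _ => Finset.sum_nonneg fun j _ =>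
    mul_nonneg (hx i (Set.mem_univ i)) (hx j (Set.mem_univ j))

theorem e1_pos {x : Fin k → ℝ} (hx : x ∈ orthant k) (hx0 : x ≠ 0) : 0 < e1 x := by
  obtain ⟨i, hi⟩ := Function.ne_iff.mp hx0
  exact (lt_of_le_of_ne (hx i (Set.mem_univ i)) (Ne.symm hi)).trans_le
    (Finset.single_le_sum (fun j _ => hx j (Set.mem_univ j)) (Finset.mem_univ i))

theorem setLIntegral_orthant_comp_smul (G : (Fin k → ℝ) → ℝ≥0∞) {s : ℝ} (hs : 0 < s) :
    ∫⁻ x in orthant k, G (s • x) = ENNReal.ofReal (s ^ (-(k : ℝ))) * ∫⁻ x in orthant k, G x := by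
  have hind : ∀ x, (orthant k).indicator (fun x => G (s • x)) x
      = (orthant k).indicator G (s • x) := by
    intro x
    by_cases hx : x ∈ orthant k
    · rw [Set.indicator_of_mem hx, Set.indicator_of_mem ((smul_mem_orthant_iff hs).2 hx)]
    · rw [Set.indicator_of_notMem hx,
        Set.indicator_of_notMem (mt (smul_mem_orthant_iff hs).1 hx)]
  rw [← lintegral_indicator measurableSet_orthant, ← lintegral_indicator measurableSet_orthant]
  simp_rw [hind]
  rw [lintegral_comp_smul volume _ hs.ne', Module.finrank_fin_fun, abs_of_pos (by positivity),
    Real.rpow_neg hs.le, Real.rpow_natCast]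

variable {f : (Fin k → ℝ) → ℝ≥0∞} {d : ℝ}

theorem setLIntegral_orthant_mul_exp_neg_smul_e1
    (hf : ∀ s > 0, ∀ x, f (s • x) = ENNReal.ofReal (s ^ d) * f x) {s : ℝ} (hs : 0 < s) :
    ∫⁻ x in orthant k, f x * ENNReal.ofReal (Real.exp (-(s * e1 x)))
      = ENNReal.ofReal (s ^ (-(d + k))) *
          ∫⁻ x in orthant k, f x * ENNReal.ofReal (Real.exp (-e1 x)) := by
  have h := setLIntegral_orthant_comp_smul (fun x => f x * ENNReal.ofReal (Real.exp (-e1 x))) hs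
  simp only [hf s hs, e1_smul, mul_assoc] at h
  rw [lintegral_const_mul' _ _ ENNReal.ofReal_ne_top] at h
  have hsd : ENNReal.ofReal (s ^ (-d)) * ENNReal.ofReal (s ^ d) = 1 := by
    rw [← ENNReal.ofReal_mul (by positivity), ← Real.rpow_add hs, neg_add_cancel,
      Real.rpow_zero, ENNReal.ofReal_one]
  rw [← one_mul (∫⁻ _ in _, _), ← hsd, mul_assoc, h, ← mul_assoc,
    ← ENNReal.ofReal_mul (by positivity), ← Real.rpow_add hs, neg_add]

theorem setLIntegral_orthant_mul_e1 [NeZero k] (hf_meas : Measurable f) (hd : 0 < d + k)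
    (hf : ∀ s > 0, ∀ x, f (s • x) = ENNReal.ofReal (s ^ d) * f x) :
    ∫⁻ x in orthant k, f x * ENNReal.ofReal (e1 x) * ENNReal.ofReal (Real.exp (-e1 x))
      = ENNReal.ofReal (d + k) * ∫⁻ x in orthant k, f x * ENNReal.ofReal (Real.exp (-e1 x)) := by
  set g : (Fin k → ℝ) → ℝ≥0∞ := fun x => f x * ENNReal.ofReal (e1 x)
  have hg : ∀ s > 0, ∀ x, g (s • x) = ENNReal.ofReal (s ^ (d + 1)) * g x := by
    intro s hs x
    simp only [g, hf s hs, e1_smul, ENNReal.ofReal_mul hs.le, Real.rpow_add_one hs.ne',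
      ENNReal.ofReal_mul (Real.rpow_nonneg hs.le d)]
    ring
  have hinner : ∫⁻ x in orthant k, f x * ENNReal.ofReal (Real.exp (-e1 x))
      = ∫⁻ x in orthant k, ∫⁻ s in Set.Ioi 1, g x * ENNReal.ofReal (Real.exp (-(s * e1 x))) := by
    refine lintegral_congr_ae ((ae_restrict_iff' measurableSet_orthant).2 ?_)
    filter_upwards [Measure.ae_ne volume 0] with x hx0 hx
    rw [lintegral_const_mul _ (by fun_prop), mul_assoc,
      ← lintegral_const_mul' _ _ ENNReal.ofReal_ne_top]
    simp_rw [← ENNReal.ofReal_mul (e1_nonneg hx)]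
    rw [lintegral_Ioi_one_mul_exp_neg_mul (e1_pos hx hx0)]
  rw [hinner, lintegral_lintegral_swap (by fun_prop),
    setLIntegral_congr_fun measurableSet_Ioi fun s hs =>
      setLIntegral_orthant_mul_exp_neg_smul_e1 hg (zero_lt_one.trans hs),
    lintegral_mul_const _ (by fun_prop), show -(d + 1 + k) = -((d + k) + 1) by ring,
    lintegral_Ioi_one_rpow_neg hd, ← mul_assoc, ← ENNReal.ofReal_mul hd.le,
    mul_inv_cancel₀ hd.ne', ENNReal.ofReal_one, one_mul]

end Orthant

section Moments

variable {k : ℕ} (m n : ℕ)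

theorem ofReal_e2_pow_mul_e1_pow_smul (s : ℝ) (hs : 0 < s) (x : Fin k → ℝ) :
    ENNReal.ofReal (e2 (s • x) ^ m * e1 (s • x) ^ n)
      = ENNReal.ofReal (s ^ ((2 * m + n : ℕ) : ℝ)) * ENNReal.ofReal (e2 x ^ m * e1 x ^ n) := by
  rw [e2_smul, e1_smul, Real.rpow_natCast, ← ENNReal.ofReal_mul (by positivity)]
  ring_nf

theorem setLIntegral_orthant_e2_pow_mul_e1_pow_succ [NeZero k] :
    ∫⁻ x in orthant k, ENNReal.ofReal (e2 x ^ m * e1 x ^ (n + 1) * Real.exp (-e1 x))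
      = (2 * m + n + k : ℕ) *
          ∫⁻ x in orthant k, ENNReal.ofReal (e2 x ^ m * e1 x ^ n * Real.exp (-e1 x)) := by
  have hsplit : ∀ x ∈ orthant k, ENNReal.ofReal (e2 x ^ m * e1 x ^ n * Real.exp (-e1 x))
      = ENNReal.ofReal (e2 x ^ m * e1 x ^ n) * ENNReal.ofReal (Real.exp (-e1 x)) := fun x hx =>
    ENNReal.ofReal_mul (mul_nonneg (pow_nonneg (e2_nonneg hx) m) (pow_nonneg (e1_nonneg hx) n))
  have hsplit_succ : ∀ x ∈ orthant k,
      ENNReal.ofReal (e2 x ^ m * e1 x ^ (n + 1) * Real.exp (-e1 x))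
        = ENNReal.ofReal (e2 x ^ m * e1 x ^ n) * ENNReal.ofReal (e1 x) *
            ENNReal.ofReal (Real.exp (-e1 x)) := fun x hx => by
    have := e1_nonneg hx
    have := e2_nonneg hx
    rw [pow_succ, ← mul_assoc, ENNReal.ofReal_mul (by positivity),
      ENNReal.ofReal_mul (by positivity)]
  rw [setLIntegral_congr_fun measurableSet_orthant hsplit_succ,
    setLIntegral_congr_fun measurableSet_orthant hsplit,
    setLIntegral_orthant_mul_e1 (by fun_prop)
      (add_pos_of_nonneg_of_pos (Nat.cast_nonneg _) (Nat.cast_pos.2 (NeZero.pos k)))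
      (ofReal_e2_pow_mul_e1_pow_smul m n),
    ← Nat.cast_add, ENNReal.ofReal_natCast]

theorem integral_orthant_e2_pow_mul_e1_pow_succ [NeZero k] :
    ∫ x in orthant k, e2 x ^ m * e1 x ^ (n + 1) * Real.exp (-e1 x)
      = (2 * m + n + k : ℕ) * ∫ x in orthant k, e2 x ^ m * e1 x ^ n * Real.exp (-e1 x) := by
  have hI : ∀ p : ℕ, ∫ x in orthant k, e2 x ^ m * e1 x ^ p * Real.exp (-e1 x)
      = (∫⁻ x in orthant k, ENNReal.ofReal (e2 x ^ m * e1 x ^ p * Real.exp (-e1 x))).toReal :=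
    fun p => integral_eq_lintegral_of_nonneg_ae
      ((ae_restrict_iff' measurableSet_orthant).2 (.of_forall fun x hx => by
        have := e1_nonneg hx; have := e2_nonneg hx; positivity))
      (by fun_prop)
  rw [hI, hI, setLIntegral_orthant_e2_pow_mul_e1_pow_succ, ENNReal.toReal_mul,
    ENNReal.toReal_natCast]

end Moments

theorem A_succ (k : ℕ) [NeZero k] (m n : ℕ) : A k m (n + 1) = A k m n := by
  have hk := NeZero.pos k
  have hN : ((2 * m + n + k : ℕ) : ℝ) ≠ 0 := Nat.cast_ne_zero.2 (by omega)
  have hfact : ((2 * m + (n + 1) + k - 1).factorial : ℝ)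
      = (2 * m + n + k : ℕ) * (2 * m + n + k - 1).factorial := by
    rw [show 2 * m + (n + 1) + k - 1 = (2 * m + n + k - 1) + 1 by omega, Nat.factorial_succ,
      Nat.cast_mul, show 2 * m + n + k - 1 + 1 = 2 * m + n + k by omega]
  unfold A
  rw [integral_orthant_e2_pow_mul_e1_pow_succ, hfact]
  field_simp

theorem stmt11 (k m : ℕ) (hk : 2 ≤ k) :
    (∀ n : ℕ, A k m (n + 1) = A k m n) ∧ ∀ n : ℕ, A k m n = A k m 0 := by
  have : NeZero k := ⟨by omega⟩
  refine ⟨A_succ k m, fun n => ?_⟩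
  induction n with
  | zero => rfl
  | succ n ih => rw [A_succ, ih]
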